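/- Let p > 1, δ ≥ 0, and for a ≥ 0 define the shifted function φ_a(t) = ∫₀ᵗ φ'(a+s)·s/(a+s) ds where φ'(t) = (δ+t)^{p-2} t. Then there exist constants c, C > 0 depending only on p such that for all a, t ≥ 0: c·(δ+a+t)^{p-2} t² ≤ φ_a(t) ≤ C·(δ+a+t)^{p-2} t². -/

import Mathlib

/-!
Since `φ'(a+s) · s/(a+s) = (δ+a+s)^(p-2) s`, with `b = δ + a` the claim is that
`∫₀ᵗ (b+s)^(p-2) s ds` is comparable to `(b+t)^(p-2) t²`. For `0 ≤ s ≤ t` we have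
`(s/t)(b+t) ≤ b+s ≤ b+t`, so, according to the sign of `q = p-2`, the integrand lies between
`(b+t)^q s` and `(s/t)^q (b+t)^q s`, whose integrals are `(b+t)^q t²/2` and `(b+t)^q t²/p`.
-/

open MeasureTheory Real Set

section

variable {b c t q : ℝ}

lemma div_mul_rpow_mul_self (hc : 0 ≤ c) (ht : 0 < t) (hq : -1 < q) {s : ℝ} (hs : 0 ≤ s) :
    (s / t * c) ^ q * s = c ^ q / t ^ q * s ^ (q + 1) := by
  rcases hs.eq_or_lt with rfl | hs
  · simp [zero_rpow (by linarith : q + 1 ≠ 0)]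
  rw [mul_rpow (by positivity) hc, div_rpow hs.le ht.le, rpow_add_one hs.ne']
  ring

lemma integral_const_mul_rpow_add_one (ht : 0 < t) (hq : -1 < q) :
    ∫ s in (0:ℝ)..t, c ^ q / t ^ q * s ^ (q + 1) = c ^ q * t ^ 2 / (q + 2) := by
  have htq : t ^ (q + 2) = t ^ q * t ^ 2 := by
    rw [rpow_add ht, rpow_two]
  rw [intervalIntegral.integral_const_mul, integral_rpow (Or.inl (by linarith)), add_assoc,
    one_add_one_eq_two, zero_rpow (by linarith), htq, sub_zero]
  field_simp

lemma intervalIntegrable_add_rpow_mul_self (hq : -1 < q) :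
    IntervalIntegrable (fun s => (b + s) ^ q * s) volume 0 t := by
  have h := (intervalIntegral.intervalIntegrable_rpow' (a := b) (b := b + t) hq).comp_add_left b
  rw [sub_self, add_sub_cancel_left] at h
  exact h.mul_continuousOn continuousOn_id

theorem integral_add_rpow_mul_self_mem_uIcc (hb : 0 ≤ b) (ht : 0 < t) (hq : -1 < q) :
    ∫ s in (0:ℝ)..t, (b + s) ^ q * s ∈
      uIcc ((b + t) ^ q * t ^ 2 / 2) ((b + t) ^ q * t ^ 2 / (q + 2)) := by
  have hbt : 0 ≤ b + t := by positivity
  have hf := intervalIntegrable_add_rpow_mul_self (b := b) (t := t) hq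
  have hg₁ : IntervalIntegrable (fun s => (b + t) ^ q * s) volume 0 t :=
    (continuous_const.mul continuous_id).intervalIntegrable 0 t
  have hg₂ : IntervalIntegrable (fun s => (b + t) ^ q / t ^ q * s ^ (q + 1)) volume 0 t :=
    (intervalIntegral.intervalIntegrable_rpow' (by linarith)).const_mul _
  have hI₁ : ∫ s in (0:ℝ)..t, (b + t) ^ q * s = (b + t) ^ q * t ^ 2 / 2 := by
    rw [intervalIntegral.integral_const_mul, integral_id]
    ring
  rw [← hI₁, ← integral_const_mul_rpow_add_one ht hq]
  have hbase : ∀ s ∈ Icc 0 t, s / t * (b + t) ≤ b + s ∧ b + s ≤ b + t := fun s hs => by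
    refine ⟨?_, by linarith [hs.2]⟩
    rw [div_mul_eq_mul_div, div_le_iff₀ ht]
    nlinarith [hs.1, hs.2]
  have hg₂_eq : ∀ s ∈ Icc 0 t,
      (b + t) ^ q / t ^ q * s ^ (q + 1) = (s / t * (b + t)) ^ q * s := fun s hs =>
    (div_mul_rpow_mul_self hbt ht hq hs.1).symm
  rcases le_total 0 q with hq0 | hq0
  · refine Icc_subset_uIcc' ⟨intervalIntegral.integral_mono_on ht.le hg₂ hf fun s hs => ?_,
      intervalIntegral.integral_mono_on ht.le hf hg₁ fun s hs => ?_⟩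
    · rw [hg₂_eq s hs]
      exact mul_le_mul_of_nonneg_right
        (rpow_le_rpow (mul_nonneg (div_nonneg hs.1 ht.le) hbt) (hbase s hs).1 hq0) hs.1
    · exact mul_le_mul_of_nonneg_right
        (rpow_le_rpow (by linarith [hs.1]) (hbase s hs).2 hq0) hs.1
  · refine Icc_subset_uIcc ⟨intervalIntegral.integral_mono_on ht.le hg₁ hf fun s hs => ?_,
      intervalIntegral.integral_mono_on ht.le hf hg₂ fun s hs => ?_⟩ <;>
    rcases hs.1.eq_or_lt with rfl | hs0
    · simp
    · exact mul_le_mul_of_nonneg_right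
        (rpow_le_rpow_of_nonpos (by positivity) (hbase s hs).2 hq0) hs.1
    · simp [zero_rpow (by linarith : q + 1 ≠ 0)]
    · rw [hg₂_eq s hs]
      exact mul_le_mul_of_nonneg_right
        (rpow_le_rpow_of_nonpos (by positivity) (hbase s hs).1 hq0) hs.1

end

theorem stmt2 (p δ : ℝ) (hp : 1 < p) (hδ : 0 ≤ δ) :
    ∃ c > (0:ℝ), ∃ C > (0:ℝ), ∀ a ≥ (0:ℝ), ∀ t ≥ (0:ℝ),
      c * (δ + a + t) ^ (p - 2) * t ^ 2 ≤
        (∫ s in (0:ℝ)..t, ((δ + (a + s)) ^ (p - 2) * (a + s)) * (s / (a + s))) ∧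
      (∫ s in (0:ℝ)..t, ((δ + (a + s)) ^ (p - 2) * (a + s)) * (s / (a + s))) ≤
        C * (δ + a + t) ^ (p - 2) * t ^ 2 := by
  refine ⟨min (1/2) (1/p), by positivity, max (1/2) (1/p), by positivity, fun a ha t ht => ?_⟩
  rcases ht.eq_or_lt with rfl | ht
  · simp
  have hintegrand : ∀ s ∈ uIcc 0 t,
      (δ + (a + s)) ^ (p - 2) * (a + s) * (s / (a + s)) = (δ + a + s) ^ (p - 2) * s := by
    intro s hs
    rcases (uIcc_of_le ht.le ▸ hs).1.eq_or_lt with rfl | hs0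
    · simp
    field_simp [show a + s ≠ 0 by positivity]
    ring_nf
  have hbounds := integral_add_rpow_mul_self_mem_uIcc (b := δ + a) (by positivity) ht
    (by linarith : -1 < p - 2)
  rw [show p - 2 + 2 = p by ring] at hbounds
  obtain ⟨hlower, hupper⟩ := hbounds
  have hA : 0 ≤ (δ + a + t) ^ (p - 2) * t ^ 2 := by positivity
  rw [intervalIntegral.integral_congr hintegrand, mul_assoc, mul_assoc,
    min_mul_of_nonneg _ _ hA, max_mul_of_nonneg _ _ hA, one_div_mul_eq_div, one_div_mul_eq_div]
  exact ⟨hlower, hupper⟩
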